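/- Let λ > 0, N ≥ 1, and n ∈ {0,...,N-1}. With h(t) = e^{-πλt²}, the STFT of the periodic delta train ε_n admits the closed form: V_h ε_n(x, ξ) = e^{-πλx²} · e^{-πλ(n/N)²} · e^{2π \bar{z}_λ n/N} · ϑ(i(\bar{z}_λ - λn/N), iλ), where z_λ = λx + iξ, \bar{z}_λ = λx - iξ, and ϑ(z,τ) = ∑_{k∈ℤ} e^{πik²τ + 2πikz}. -/
import Mathlib


open Complex

/-- The Jacobi theta function `ϑ(z, τ) = ∑_{k∈ℤ} e^{πik²τ + 2πikz}`. -/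
noncomputable def jacobiThetaFn (z τ : ℂ) : ℂ :=
  ∑' k : ℤ, Complex.exp (Real.pi * Complex.I * k ^ 2 * τ + 2 * Real.pi * Complex.I * k * z)

/-- The STFT of the periodic delta train `ε_n` with window `h`. -/
noncomputable def stftDeltaTrain (h : ℝ → ℂ) (N : ℕ) (n : ℕ) (x ξ : ℝ) : ℂ :=
  ∑' k : ℤ, (starRingEnd ℂ) (h ((n : ℝ) / N + k - x)) *
    Complex.exp (-2 * Real.pi * Complex.I * ξ * ((n : ℝ) / N + k))

theorem stft_delta_train_gaussian_closed_form (lam : ℝ) (hlam : 0 < lam)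
    (N : ℕ) (hN : 1 ≤ N) (n : ℕ) (hn : n < N) (x ξ : ℝ) :
    stftDeltaTrain (fun t => (Real.exp (-Real.pi * lam * t ^ 2) : ℂ)) N n x ξ =
      Complex.exp (-Real.pi * lam * x ^ 2) *
        Complex.exp (-Real.pi * lam * ((n : ℝ) / N) ^ 2) *
        Complex.exp (2 * Real.pi * ((lam * x : ℂ) - Complex.I * ξ) * n / N) *
        jacobiThetaFn
          (Complex.I * (((lam * x : ℂ) - Complex.I * ξ) - lam * n / N))
          (Complex.I * lam) := by
  unfold stftDeltaTrain jacobiThetaFn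
  rw [← tsum_mul_left, ← Equiv.tsum_eq (Equiv.neg ℤ)]
  refine tsum_congr fun k => ?_
  simp only [Equiv.neg_apply]
  rw [Complex.conj_ofReal, Complex.ofReal_exp, ← Complex.exp_add, ← Complex.exp_add,
    ← Complex.exp_add, ← Complex.exp_add]
  congr 1
  push_cast
  have h3 : (Complex.I) ^ 3 = -Complex.I := by
    rw [pow_succ, Complex.I_sq]; ring
  ring_nf
  simp only [h3, Complex.I_sq]
  ring
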